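/- Let B be an n×n real expanding matrix with card D = |det B| = m ∈ ℤ, where D ⊂ ℝⁿ is a finite set with 0 ∈ D, and suppose the self-affine set K = K(B,D) has positive Lebesgue measure. Then the translates {K + ℓ}_{ℓ∈D_∞} are pairwise essentially disjoint; equivalently, Σ_{ℓ∈D_∞} χ_{K+ℓ}(x) ≤ 1 for almost every x ∈ ℝⁿ. -/

import Mathlib

/-!
Iterating the set equation gives `B^k K = ⋃_{ℓ ∈ D^k} (K + Σ_j B^j ℓ_j)`. The left side has
volume `|det B|^k vol K = (#D)^k vol K`, which is the sum of the volumes of the `(#D)^k`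
translates on the right, so these translates pairwise meet in null sets. Padding with the digit
`0 ∈ D` puts any two points of `D_∞` into a common `D_k`, and `D_∞` is countable, so almost every
point lies in at most one translate `K + ℓ`.
-/

open MeasureTheory Filter
open scoped ENNReal

/-- `D_∞ = ⋃_{k ≥ 1} D_k` where `D_k = {Σ_{j<k} B^j ℓ_j : ℓ_j ∈ D}`. -/
def Dinfty {n : ℕ} (B : Matrix (Fin n) (Fin n) ℝ)
    (D : Finset (EuclideanSpace ℝ (Fin n))) : Set (EuclideanSpace ℝ (Fin n)) :=
  {x | ∃ k : ℕ, 1 ≤ k ∧ ∃ f : Fin k → D,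
    x = ∑ j : Fin k, Matrix.toEuclideanLin (B ^ (j : ℕ)) (f j)}

open Set Function

theorem tsum_indicator_one_le_one {α ι : Type*} {s : ι → Set α} {x : α}
    (h : ∀ i j, x ∈ s i → x ∈ s j → i = j) :
    ∑' i, (s i).indicator (fun _ => (1 : ℝ≥0∞)) x ≤ 1 := by
  by_cases hx : ∃ i, x ∈ s i
  · obtain ⟨i, hi⟩ := hx
    rw [tsum_eq_single i fun j hj => indicator_of_notMem (fun hxj => hj (h j i hxj hi)) _,
      indicator_of_mem hi]
  · simp [indicator_of_notMem (not_exists.1 hx _)]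

section AEDisjoint

variable {α ι : Type*} [MeasurableSpace α] {μ : Measure α}

theorem pairwise_aedisjoint_of_sum_le_measure_iUnion [Fintype ι] {s : ι → Set α}
    (hs : ∀ i, NullMeasurableSet (s i) μ) (hfin : ∑ i, μ (s i) ≠ ∞)
    (h : ∑ i, μ (s i) ≤ μ (⋃ i, s i)) : Pairwise (AEDisjoint μ on s) := by
  classical
  intro i j hij
  set rest := (Finset.univ.erase i).erase j
  have hj : j ∈ Finset.univ.erase i := Finset.mem_erase.2 ⟨hij.symm, Finset.mem_univ j⟩
  have hsum : ∑ x, μ (s x) = μ (s i) + (μ (s j) + ∑ x ∈ rest, μ (s x)) := by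
    rw [← Finset.add_sum_erase _ _ (Finset.mem_univ i), ← Finset.add_sum_erase _ _ hj]
  have hcover : (⋃ x, s x) ⊆ (s i ∪ s j) ∪ ⋃ x ∈ rest, s x := by
    intro y hy
    obtain ⟨x, hx⟩ := mem_iUnion.1 hy
    by_cases hxi : x = i
    · exact Or.inl (Or.inl (hxi ▸ hx))
    by_cases hxj : x = j
    · exact Or.inl (Or.inr (hxj ▸ hx))
    · exact Or.inr (mem_biUnion (by simp [rest, hxi, hxj]) hx)
  have key : ∑ x, μ (s x) + μ (s i ∩ s j) ≤ ∑ x, μ (s x) + 0 :=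
    calc ∑ x, μ (s x) + μ (s i ∩ s j)
        ≤ μ ((s i ∪ s j) ∪ ⋃ x ∈ rest, s x) + μ (s i ∩ s j) :=
          add_le_add_left (h.trans (measure_mono hcover)) _
      _ ≤ μ (s i ∪ s j) + μ (s i ∩ s j) + μ (⋃ x ∈ rest, s x) := by
          rw [add_right_comm]; exact add_le_add_left (measure_union_le _ _) _
      _ ≤ μ (s i) + μ (s j) + ∑ x ∈ rest, μ (s x) := by
          rw [measure_union_add_inter₀ _ (hs j)]
          exact add_le_add_right (measure_biUnion_finset_le _ _) _
      _ = ∑ x, μ (s x) + 0 := by rw [hsum, add_zero, add_assoc]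
  exact le_antisymm ((ENNReal.add_le_add_iff_left hfin).1 key) zero_le

theorem ae_tsum_indicator_one_le_one [Countable ι] {s : ι → Set α}
    (hd : Pairwise (AEDisjoint μ on s)) :
    ∀ᵐ x ∂μ, ∑' i, (s i).indicator (fun _ => (1 : ℝ≥0∞)) x ≤ 1 := by
  have hae : ∀ᵐ x ∂μ, ∀ i j, x ∈ s i → x ∈ s j → i = j := by
    refine ae_all_iff.2 fun i => ae_all_iff.2 fun j => ?_
    by_cases hij : i = j
    · exact Eventually.of_forall fun _ _ _ => hij
    · filter_upwards [measure_eq_zero_iff_ae_notMem.1 (hd hij)] with x hx hi hj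
      exact absurd ⟨hi, hj⟩ hx
  filter_upwards [hae] with x hx using tsum_indicator_one_le_one hx

end AEDisjoint

section DigitExpansion

variable {R E ι : Type*} [Semiring R] [AddCommMonoid E] [Module R E] (T : E →ₗ[R] E) (d : ι → E)

def digitExpansion {k : ℕ} (f : Fin k → ι) : E :=
  ∑ j : Fin k, (T ^ (j : ℕ)) (d (f j))

def digitExpansions : Set E :=
  ⋃ k, range (digitExpansion T d : (Fin k → ι) → E)

theorem countable_digitExpansions [Countable ι] : (digitExpansions T d).Countable :=
  countable_iUnion fun _ => countable_range _

theorem digitExpansion_cons {k : ℕ} (i : ι) (f : Fin k → ι) :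
    digitExpansion T d (Fin.cons i f : Fin (k + 1) → ι) = d i + T (digitExpansion T d f) := by
  simp [digitExpansion, Fin.sum_univ_succ, pow_succ', map_sum]

theorem digitExpansion_snoc {k : ℕ} (f : Fin k → ι) (i : ι) :
    digitExpansion T d (Fin.snoc f i : Fin (k + 1) → ι) =
      digitExpansion T d f + (T ^ k) (d i) := by
  simp [digitExpansion, Fin.sum_univ_castSucc]

theorem exists_digitExpansion_eq_of_le {i₀ : ι} (h₀ : d i₀ = 0) {k N : ℕ} (hkN : k ≤ N)
    (f : Fin k → ι) : ∃ g : Fin N → ι, digitExpansion T d g = digitExpansion T d f := by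
  induction N, hkN using Nat.le_induction with
  | base => exact ⟨f, rfl⟩
  | succ N _ ih =>
    obtain ⟨g, hg⟩ := ih
    exact ⟨Fin.snoc g i₀, by rw [digitExpansion_snoc, h₀, map_zero, add_zero, hg]⟩

variable {T d}

theorem image_pow_eq_iUnion_image_add_digitExpansion {K : Set E}
    (hK : T '' K = ⋃ i, (· + d i) '' K) (k : ℕ) :
    (T ^ k) '' K = ⋃ f : Fin k → ι, (· + digitExpansion T d f) '' K := by
  induction k with
  | zero => simp [digitExpansion, iUnion_const]
  | succ k ih =>
    have hT (v : E) (s : Set E) : T '' ((· + v) '' s) = (· + T v) '' (T '' s) :=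
      image_comm fun x => map_add T x v
    calc (T ^ (k + 1)) '' K = T '' ((T ^ k) '' K) := by
          rw [pow_succ', Module.End.mul_eq_comp, LinearMap.coe_comp, image_comp]
      _ = ⋃ p : ι × (Fin k → ι), (· + (d p.1 + T (digitExpansion T d p.2))) '' K := by
          simp only [ih, image_iUnion, hT, hK, image_image, add_assoc, iUnion_prod']
          exact iUnion_comm _
      _ = ⋃ g : Fin (k + 1) → ι, (· + digitExpansion T d g) '' K :=
          (Fin.consEquiv fun _ => ι).iSup_congr fun p => by
            simp [Fin.consEquiv, digitExpansion_cons]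

end DigitExpansion

section AddHaar

variable {E ι : Type*} [NormedAddCommGroup E] [NormedSpace ℝ E] [FiniteDimensional ℝ E]
  [MeasurableSpace E] [BorelSpace E] (μ : Measure E) [μ.IsAddHaarMeasure] [Fintype ι]
  {T : E →ₗ[ℝ] E} {d : ι → E} {K : Set E}

theorem pairwise_aedisjoint_image_add_digitExpansion (hK_meas : MeasurableSet K)
    (hK_fin : μ K ≠ ∞) (hK : T '' K = ⋃ i, (· + d i) '' K)
    (hdet : |LinearMap.det T| = Fintype.card ι) (k : ℕ) :
    Pairwise (AEDisjoint μ on fun f : Fin k → ι => (· + digitExpansion T d f) '' K) := by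
  have hmeas (v : E) : MeasurableSet ((· + v) '' K) := by
    rw [image_add_right]; exact hK_meas.preimage (measurable_add_const _)
  have hvol (v : E) : μ ((· + v) '' K) = μ K := by
    rw [image_add_right, measure_preimage_add_right]
  have hsum : ∑ f : Fin k → ι, μ ((· + digitExpansion T d f) '' K) =
      (Fintype.card ι : ℝ≥0∞) ^ k * μ K := by
    simp only [hvol, Finset.sum_const, Finset.card_univ, Fintype.card_fun, nsmul_eq_mul,
      Fintype.card_fin, Nat.cast_pow]
  refine pairwise_aedisjoint_of_sum_le_measure_iUnion (fun f => (hmeas _).nullMeasurableSet)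
    (by rw [hsum]; finiteness) (le_of_eq ?_)
  rw [← image_pow_eq_iUnion_image_add_digitExpansion hK, Measure.addHaar_image_linearMap,
    map_pow, abs_pow, hdet, hsum, ENNReal.ofReal_pow (Nat.cast_nonneg _), ENNReal.ofReal_natCast]

theorem pairwise_aedisjoint_image_add_digitExpansions {i₀ : ι} (h₀ : d i₀ = 0)
    (hK_meas : MeasurableSet K) (hK_fin : μ K ≠ ∞) (hK : T '' K = ⋃ i, (· + d i) '' K)
    (hdet : |LinearMap.det T| = Fintype.card ι) :
    (digitExpansions T d).Pairwise (AEDisjoint μ on fun v => (· + v) '' K) := by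
  rintro _ ⟨_, ⟨k, rfl⟩, f, rfl⟩ _ ⟨_, ⟨k', rfl⟩, f', rfl⟩ hne
  obtain ⟨g, hg⟩ := exists_digitExpansion_eq_of_le T d h₀ (le_max_left k k') f
  obtain ⟨g', hg'⟩ := exists_digitExpansion_eq_of_le T d h₀ (le_max_right k k') f'
  have hgg' : g ≠ g' := by rintro rfl; exact hne (hg.symm.trans hg')
  simpa only [onFun, hg, hg'] using
    pairwise_aedisjoint_image_add_digitExpansion μ hK_meas hK_fin hK hdet _ hgg'

end AddHaar

theorem Dinfty_subset_digitExpansions {n : ℕ} (B : Matrix (Fin n) (Fin n) ℝ)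
    (D : Finset (EuclideanSpace ℝ (Fin n))) :
    Dinfty B D ⊆ digitExpansions B.toEuclideanLin ((↑) : D → EuclideanSpace ℝ (Fin n)) := by
  rintro _ ⟨k, -, f, rfl⟩
  exact mem_iUnion.2 ⟨k, f, by simp [digitExpansion, Matrix.toLpLin_pow]⟩

theorem translates_essentially_disjoint_general {n : ℕ} (B : Matrix (Fin n) (Fin n) ℝ)
    (D : Finset (EuclideanSpace ℝ (Fin n))) (hD0 : (0 : EuclideanSpace ℝ (Fin n)) ∈ D)
    (hcard : (D.card : ℝ) = |B.det|)
    (K : Set (EuclideanSpace ℝ (Fin n))) (hKc : IsCompact K)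
    (hK : Matrix.toEuclideanLin B '' K = ⋃ d ∈ D, (fun x => x + d) '' K) :
    ∀ᵐ x : EuclideanSpace ℝ (Fin n),
      ∑' ℓ : Dinfty B D,
        ((fun y => y + (ℓ : EuclideanSpace ℝ (Fin n))) '' K).indicator
          (fun _ => (1 : ℝ≥0∞)) x ≤ 1 := by
  have hK' : B.toEuclideanLin '' K = ⋃ d : D, (· + (d : EuclideanSpace ℝ (Fin n))) '' K := by
    rw [hK, iUnion_subtype]
  have hdet : |LinearMap.det B.toEuclideanLin| = Fintype.card D := by
    rw [LinearMap.det_toLpLin, Fintype.card_coe, hcard]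
  have hsub := Dinfty_subset_digitExpansions B D
  have : Countable (Dinfty B D) := ((countable_digitExpansions _ _).mono hsub).to_subtype
  refine ae_tsum_indicator_one_le_one ?_
  exact (pairwise_subtype_iff_pairwise_set _ _).2 <|
    (pairwise_aedisjoint_image_add_digitExpansions volume (i₀ := ⟨0, hD0⟩) rfl
      hKc.measurableSet hKc.measure_lt_top.ne hK' hdet).mono hsub

/-- **Lemma.** Let `B` be an expanding real `n×n` matrix, `D ⊆ ℝⁿ` finite with `0 ∈ D` and
`card D = |det B| = m ∈ ℤ`, and suppose the self-affine set `K = K(B,D)` has positive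
Lebesgue measure. Then the translates `{K + ℓ}_{ℓ ∈ D_∞}` are pairwise essentially disjoint:
`Σ_{ℓ ∈ D_∞} χ_{K+ℓ}(x) ≤ 1` for almost every `x ∈ ℝⁿ`. -/
theorem translates_essentially_disjoint {n : ℕ} (B : Matrix (Fin n) (Fin n) ℝ)
    (hB : ∀ μ ∈ spectrum ℂ (B.map (algebraMap ℝ ℂ)), 1 < ‖μ‖)
    (m : ℤ) (hm : |B.det| = (m : ℝ))
    (D : Finset (EuclideanSpace ℝ (Fin n))) (hD0 : (0 : EuclideanSpace ℝ (Fin n)) ∈ D)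
    (hcard : (D.card : ℝ) = |B.det|)
    (K : Set (EuclideanSpace ℝ (Fin n))) (hKc : IsCompact K) (hKne : K.Nonempty)
    (hK : Matrix.toEuclideanLin B '' K = ⋃ d ∈ D, (fun x => x + d) '' K)
    (hKpos : 0 < volume K) :
    ∀ᵐ x : EuclideanSpace ℝ (Fin n),
      ∑' ℓ : Dinfty B D,
        ((fun y => y + (ℓ : EuclideanSpace ℝ (Fin n))) '' K).indicator
          (fun _ => (1 : ℝ≥0∞)) x ≤ 1 :=
  translates_essentially_disjoint_general B D hD0 hcard K hKc hK
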